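/- Let L be a complete lattice which is upper continuous, and suppose Cen(L) is a complete atomistic sublattice of L. Then L is totally decomposable. -/

import Mathlib

/-!
The center atoms `u` are pairwise disjoint (the meet of two of them is central, as the center
is a complete sublattice) and join to `⊤`. Upper continuity turns meets with infinite joins
into directed joins of meets with finite joins, over which central elements distribute; hence
`x ↦ (u ⊓ x)_u` is an order isomorphism `L ≃o ∀ u, Iic u`. Each factor `Iic u` is
indecomposable: a nontrivial splitting `Iic u ≃o A × B` makes the preimage of `(⊤, ⊥)` central
in `Iic u`, hence central in `L` through `L ≃o Iic u × Iic w` (`w` a complement of `u`), which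
contradicts the minimality of `u`.
-/

universe u

/-- An element `a` of a lattice is *neutral* if every triple `{a, x, y}`
generates a distributive sublattice; we use the standard equational
characterization. -/
def IsNeutral {L : Type*} [Lattice L] (a : L) : Prop :=
  ∀ x y : L, (a ⊔ x) ⊓ (a ⊔ y) ⊓ (x ⊔ y) = (a ⊓ x) ⊔ (a ⊓ y) ⊔ (x ⊓ y)

/-- An element of a bounded lattice is *central* if it is neutral and complemented. -/
def IsCentral {L : Type*} [Lattice L] [BoundedOrder L] (a : L) : Prop :=
  IsNeutral a ∧ ∃ b : L, a ⊓ b = ⊥ ∧ a ⊔ b = ⊤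

/-- `a` is an atom of the center `Cen L`. -/
def IsCenterAtom {L : Type*} [Lattice L] [BoundedOrder L] (a : L) : Prop :=
  IsCentral a ∧ a ≠ ⊥ ∧ ∀ b : L, IsCentral b → b < a → b = ⊥

/-- A bounded lattice is *directly indecomposable* if whenever it is isomorphic to a
product of two bounded lattices, one of the factors is trivial. -/
def DirectlyIndecomposable (M : Type u) [Lattice M] [BoundedOrder M] : Prop :=
  ∀ A B : BddLat.{u}, Nonempty (M ≃o ↥A × ↥B) → Subsingleton ↥A ∨ Subsingleton ↥B

/-- A bounded lattice is *totally decomposable* if it is isomorphic to a direct product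
of directly indecomposable lattices. -/
def TotallyDecomposable (M : Type u) [Lattice M] [BoundedOrder M] : Prop :=
  ∃ (ι : Type u) (F : ι → BddLat.{u}),
    (∀ i, DirectlyIndecomposable ↥(F i)) ∧ Nonempty (M ≃o ∀ i, ↥(F i))

open Function Set

section Lattice

variable {L : Type*} [Lattice L]

theorem IsNeutral.inf_sup_of_le {a s : L} (ha : IsNeutral a) (hs : s ≤ a) (t : L) :
    a ⊓ (s ⊔ t) = s ⊔ a ⊓ t := by
  refine le_antisymm ?_ (sup_le (le_inf hs le_sup_left) (inf_le_inf_left a le_sup_right))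
  calc a ⊓ (s ⊔ t) = (a ⊔ s) ⊓ (a ⊔ t) ⊓ (s ⊔ t) := by
        rw [sup_eq_left.2 hs, inf_of_le_left (le_sup_left : a ≤ a ⊔ t)]
    _ = a ⊓ s ⊔ a ⊓ t ⊔ s ⊓ t := ha s t
    _ ≤ s ⊔ a ⊓ t := sup_le (sup_le_sup_right inf_le_right _) (le_sup_of_le_left inf_le_left)

theorem IsNeutral.map {β : Type*} [Lattice β] (e : L ≃o β) {a : L} (ha : IsNeutral a) :
    IsNeutral (e a) := by
  intro x y
  obtain ⟨x, rfl⟩ := e.surjective x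
  obtain ⟨y, rfl⟩ := e.surjective y
  simp only [← map_sup, ← map_inf, ha x y]

end Lattice

section BoundedLattice

variable {L : Type*} [Lattice L] [BoundedOrder L]

theorem IsNeutral.eq_inf_sup_inf {a w : L} (ha : IsNeutral a) (haw : IsCompl a w) (x : L) :
    x = a ⊓ x ⊔ w ⊓ x := by
  have h := ha x w
  rw [haw.sup_eq_top, inf_top_eq, haw.inf_eq_bot, sup_bot_eq, inf_comm x w] at h
  exact le_antisymm (h ▸ le_inf le_sup_right le_sup_left) (sup_le inf_le_right inf_le_right)

theorem IsNeutral.inf_sup_eq_of_le {a w s : L} (ha : IsNeutral a) (haw : IsCompl a w)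
    (hs : s ≤ a) (d : L) : w ⊓ (s ⊔ d) = w ⊓ d := by
  set z := w ⊓ (s ⊔ d)
  have hdz : w ⊓ d ≤ z := inf_le_inf_left w le_sup_right
  have haz : a ⊓ z = ⊥ := le_bot_iff.1 (haw.inf_eq_bot ▸ inf_le_inf_left a inf_le_left)
  have had : a ⊓ (w ⊓ d) = ⊥ := by rw [← inf_assoc, haw.inf_eq_bot, bot_inf_eq]
  have hz : z ≤ a ⊔ w ⊓ d := by
    calc z ≤ s ⊔ d := inf_le_right
      _ ≤ a ⊔ (a ⊓ d ⊔ w ⊓ d) := sup_le_sup hs (ha.eq_inf_sup_inf haw d).le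
      _ = a ⊔ w ⊓ d := by rw [← sup_assoc, sup_inf_self]
  -- neutrality of `a` at `(z, w ⊓ d)`: the left side collapses to `z`, the right to `w ⊓ d`
  have h := ha z (w ⊓ d)
  rw [haz, had, bot_sup_eq, bot_sup_eq, inf_of_le_right hdz, sup_of_le_left hdz,
    inf_eq_right.2 (le_inf le_sup_right hz)] at h
  exact h

theorem IsCentral.inf_sup_left {a : L} (ha : IsCentral a) (x y : L) :
    a ⊓ (x ⊔ y) = a ⊓ x ⊔ a ⊓ y := by
  obtain ⟨ha, w, haw_inf, haw_sup⟩ := ha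
  have haw := IsCompl.of_eq haw_inf haw_sup
  have hw : a ⊓ (w ⊓ x ⊔ w ⊓ y) = ⊥ :=
    le_bot_iff.1 (haw_inf ▸ inf_le_inf_left a (sup_le inf_le_left inf_le_left))
  calc a ⊓ (x ⊔ y) = a ⊓ ((a ⊓ x ⊔ a ⊓ y) ⊔ (w ⊓ x ⊔ w ⊓ y)) := by
        conv_lhs => rw [ha.eq_inf_sup_inf haw x, ha.eq_inf_sup_inf haw y]
        ac_rfl
    _ = a ⊓ x ⊔ a ⊓ y := by
        rw [ha.inf_sup_of_le (sup_le inf_le_left inf_le_left), hw, sup_bot_eq]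

theorem IsCentral.inf_central_sup {a : L} (ha : IsCentral a) (x d : L) :
    x ⊓ (a ⊔ d) = x ⊓ a ⊔ x ⊓ d := by
  obtain ⟨ha, w, haw_inf, haw_sup⟩ := ha
  have haw := IsCompl.of_eq haw_inf haw_sup
  refine le_antisymm ?_ (sup_le (inf_le_inf_left x le_sup_left) (inf_le_inf_left x le_sup_right))
  have hw : w ⊓ (x ⊓ (a ⊔ d)) ≤ x ⊓ d := by
    rw [inf_left_comm, ha.inf_sup_eq_of_le haw le_rfl]
    exact inf_le_inf_left x inf_le_right
  calc x ⊓ (a ⊔ d) = a ⊓ (x ⊓ (a ⊔ d)) ⊔ w ⊓ (x ⊓ (a ⊔ d)) := ha.eq_inf_sup_inf haw _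
    _ ≤ x ⊓ a ⊔ x ⊓ d := sup_le_sup (le_inf (inf_le_right.trans inf_le_left) inf_le_left) hw

theorem IsCentral.inf_finset_sup {a : L} (ha : IsCentral a) {ι : Type*} (s : Finset ι)
    (f : ι → L) : a ⊓ s.sup f = s.sup fun i => a ⊓ f i := by
  induction s using Finset.cons_induction with
  | empty => simp
  | cons i s _ ih => rw [Finset.sup_cons, Finset.sup_cons, ha.inf_sup_left, ih]

theorem Finset.inf_sup_of_forall_isCentral {ι : Type*} {s : Finset ι} {f : ι → L}
    (hf : ∀ i ∈ s, IsCentral (f i)) (x : L) : x ⊓ s.sup f = s.sup fun i => x ⊓ f i := by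
  induction s using Finset.cons_induction with
  | empty => simp
  | cons i s _ ih =>
    rw [Finset.forall_mem_cons] at hf
    rw [Finset.sup_cons, Finset.sup_cons, hf.1.inf_central_sup, ih hf.2]

theorem isCentral_top : IsCentral (⊤ : L) :=
  ⟨fun x y => by simp, ⊥, inf_bot_eq ⊤, sup_bot_eq ⊤⟩

theorem IsCentral.map {β : Type*} [Lattice β] [BoundedOrder β] (e : L ≃o β) {a : L}
    (ha : IsCentral a) : IsCentral (e a) := by
  obtain ⟨ha, w, haw_inf, haw_sup⟩ := ha
  exact ⟨ha.map e, e w, by rw [← map_inf, haw_inf, map_bot], by rw [← map_sup, haw_sup, map_top]⟩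

theorem IsCentral.prod_bot {β : Type*} [Lattice β] [BoundedOrder β] {a : L} (ha : IsCentral a) :
    IsCentral (a, (⊥ : β)) := by
  obtain ⟨ha, w, haw_inf, haw_sup⟩ := ha
  refine ⟨?_, (w, ⊤), Prod.ext (by simpa using haw_inf) (by simp),
    Prod.ext (by simpa using haw_sup) (by simp)⟩
  rintro ⟨x₁, x₂⟩ ⟨y₁, y₂⟩
  ext
  · exact ha x₁ y₁
  · simp

def IsNeutral.orderIsoIicProd {a w : L} (ha : IsNeutral a) (haw : IsCompl a w) :
    L ≃o Iic a × Iic w where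
  toFun x := (⟨a ⊓ x, inf_le_left⟩, ⟨w ⊓ x, inf_le_left⟩)
  invFun y := y.1 ⊔ y.2
  left_inv x := (ha.eq_inf_sup_inf haw x).symm
  right_inv := by
    rintro ⟨⟨y, hy⟩, ⟨z, hz⟩⟩
    have haz : a ⊓ z = ⊥ := le_bot_iff.1 (haw.inf_eq_bot ▸ inf_le_inf_left a hz)
    ext
    · simp [ha.inf_sup_of_le hy, haz]
    · simp [ha.inf_sup_eq_of_le haw hy, inf_eq_right.2 hz]
  map_rel_iff' {x y} := by
    refine ⟨fun h => ?_, fun h => ⟨inf_le_inf_left a h, inf_le_inf_left w h⟩⟩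
    rw [ha.eq_inf_sup_inf haw x, ha.eq_inf_sup_inf haw y]
    exact sup_le_sup h.1 h.2

theorem IsCentral.coe_of_Iic {a w : L} (ha : IsNeutral a) (haw : IsCompl a w) {p : Iic a}
    (hp : IsCentral p) : IsCentral (p : L) := by
  simpa [IsNeutral.orderIsoIicProd] using
    (hp.prod_bot (β := Iic w)).map (ha.orderIsoIicProd haw).symm

theorem IsCenterAtom.disjoint {a b : L} (ha : IsCenterAtom a) (hb : IsCenterAtom b) (hab : a ≠ b)
    (h : IsCentral (a ⊓ b)) : Disjoint a b := by
  refine disjoint_iff.2 (ha.2.2 _ h (inf_le_left.lt_of_ne fun h' => hab ?_))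
  by_contra hne
  exact ha.2.1 (hb.2.2 a ha.1 ((inf_eq_left.1 h').lt_of_ne hne))

theorem IsCenterAtom.directlyIndecomposable_Iic {L : Type u} [Lattice L] [BoundedOrder L]
    {a : L} (ha : IsCenterAtom a) : DirectlyIndecomposable (Iic a) := by
  obtain ⟨⟨ha, w, haw_inf, haw_sup⟩, -, ha_min⟩ := ha
  rintro A B ⟨g⟩
  by_contra! h
  obtain ⟨hA, hB⟩ := h
  set p : Iic a := g.symm (⊤, ⊥)
  have hgp : g p = (⊤, ⊥) := g.apply_symm_apply _
  have hp : IsCentral (p : L) :=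
    (isCentral_top.prod_bot.map g.symm).coe_of_Iic ha (IsCompl.of_eq haw_inf haw_sup)
  have hp_ne_bot : p ≠ ⊥ := fun h => by simpa [h] using congrArg Prod.fst hgp
  have hp_ne_top : p ≠ ⊤ := fun h => by simpa [h] using congrArg Prod.snd hgp
  exact hp_ne_bot (Subtype.ext (ha_min p hp (Subtype.coe_lt_coe.2 hp_ne_top.lt_top)))

end BoundedLattice

def UpperContinuous (L : Type*) [CompleteLattice L] : Prop :=
  ∀ (x : L) (D : Set L), D.Nonempty → DirectedOn (· ≤ ·) D → x ⊓ sSup D = ⨆ d ∈ D, x ⊓ d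

namespace UpperContinuous

variable {L : Type*} [CompleteLattice L] (hL : UpperContinuous L) {ι : Type*}
include hL

theorem inf_iSup (x : L) (f : ι → L) : x ⊓ ⨆ i, f i = ⨆ s : Finset ι, x ⊓ s.sup f := by
  have hdir : Directed (· ≤ ·) fun s : Finset ι => s.sup f :=
    Monotone.directed_le fun _ _ => Finset.sup_mono
  have hf : ⨆ i, f i = sSup (range fun s : Finset ι => s.sup f) := by
    simp only [sSup_range, Finset.sup_eq_iSup, ← iSup_eq_iSup_finset]
  rw [hf, hL x _ (range_nonempty _) (directedOn_range.2 hdir), iSup_range]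

variable {e : ι → L}

theorem iSup_inf_eq (he : ∀ i, IsCentral (e i)) (htop : ⨆ i, e i = ⊤) (x : L) :
    ⨆ i, e i ⊓ x = x := by
  refine le_antisymm (iSup_le fun _ => inf_le_right) ?_
  calc x = x ⊓ ⨆ i, e i := by rw [htop, inf_top_eq]
    _ = ⨆ s : Finset ι, s.sup fun i => x ⊓ e i := by
        simp only [hL.inf_iSup, Finset.inf_sup_of_forall_isCentral fun i _ => he i]
    _ ≤ ⨆ i, e i ⊓ x := iSup_le fun s => Finset.sup_le fun i _ =>
        inf_comm x (e i) ▸ le_iSup (fun i => e i ⊓ x) i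

theorem inf_iSup_of_le {i : ι} (he : IsCentral (e i)) (hdisj : Pairwise (Disjoint on e))
    {f : ι → L} (hf : ∀ j, f j ≤ e j) : e i ⊓ ⨆ j, f j = f i := by
  refine le_antisymm ?_ (le_inf (hf i) (le_iSup f i))
  rw [hL.inf_iSup]
  refine iSup_le fun s => (he.inf_finset_sup s f).le.trans (Finset.sup_le fun j _ => ?_)
  obtain rfl | hij := eq_or_ne i j
  · exact inf_le_right
  · exact ((hdisj hij).mono_right (hf j)).eq_bot.le.trans bot_le

def orderIsoPiIic (he : ∀ i, IsCentral (e i)) (hdisj : Pairwise (Disjoint on e))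
    (htop : ⨆ i, e i = ⊤) : L ≃o ∀ i, Iic (e i) where
  toFun x i := ⟨e i ⊓ x, inf_le_left⟩
  invFun f := ⨆ i, (f i : L)
  left_inv := hL.iSup_inf_eq he htop
  right_inv f := funext fun i => Subtype.ext (hL.inf_iSup_of_le (he i) hdisj fun j => (f j).2)
  map_rel_iff' {x y} := by
    refine ⟨fun h => ?_, fun h i => inf_le_inf_left (e i) h⟩
    rw [← hL.iSup_inf_eq he htop x, ← hL.iSup_inf_eq he htop y]
    exact iSup_mono h

end UpperContinuous

/-- An upper continuous complete lattice whose center is a complete atomistic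
sublattice is totally decomposable. -/
theorem totallyDecomposable_of_upperContinuous {L : Type u} [CompleteLattice L]
    (hUC : ∀ (x : L) (D : Set L), D.Nonempty → DirectedOn (· ≤ ·) D →
      x ⊓ sSup D = ⨆ d ∈ D, x ⊓ d)
    (hCpl : ∀ S : Set L, (∀ a ∈ S, IsCentral a) → IsCentral (sSup S) ∧ IsCentral (sInf S))
    (hAtic : ∀ a : L, IsCentral a → a = sSup {u : L | IsCenterAtom u ∧ u ≤ a}) :
    TotallyDecomposable L := by
  let ι := {u : L // IsCenterAtom u}
  have hdisj : Pairwise (Disjoint on fun u : ι => (u : L)) := fun u v huv => by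
    refine u.2.disjoint v.2 (Subtype.coe_ne_coe.2 huv) ?_
    simpa using (hCpl {u.1, v.1} (by rintro a (rfl | rfl); exacts [u.2.1, v.2.1])).2
  have htop : ⨆ u : ι, (u : L) = ⊤ := by
    refine top_unique ((hAtic ⊤ isCentral_top).trans_le (sSup_le fun b hb => ?_))
    exact le_iSup_of_le (⟨b, hb.1⟩ : ι) le_rfl
  exact ⟨ι, fun u => BddLat.of (Iic (u : L)), fun u => u.2.directlyIndecomposable_Iic,
    ⟨UpperContinuous.orderIsoPiIic hUC (fun u => u.2.1) hdisj htop⟩⟩
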